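/- The exponential map exp : d → D, where d = ℂ[[ξ]]ξ d/dξ is the Lie algebra of formal vector fields vanishing at 0 and D = Aut ℂ((ξ)), defined by exp(l)(f(ξ)) = ∑_{k≥0} (1/k!) l^k f(ξ), restricts to a bijection from d₊⁰ = {(αξ + α₁ξ² + ⋯) d/dξ : α ∈ ℝ} onto D₊⁰ = {h : h(ξ) = aξ + a₁ξ² + ⋯, a > 0}. -/

import Mathlib

open PowerSeries

/-- The formal derivative `f'` of a power series `f ∈ ℂ[[ξ]]`. -/
noncomputable def psDeriv (f : PowerSeries ℂ) : PowerSeries ℂ :=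
  PowerSeries.mk fun n => ((n : ℂ) + 1) * PowerSeries.coeff (R := ℂ) (n + 1) f

/-- The action of the formal vector field `l(ξ) d/dξ` on `f ∈ ℂ[[ξ]]`:
`(l(ξ) d/dξ) f = l·f'`. -/
noncomputable def vfAct (l f : PowerSeries ℂ) : PowerSeries ℂ := l * psDeriv f

/-- `exp(l)(f) = ∑_{k≥0} (1/k!) lᵏf` for a formal vector field `l = l(ξ) d/dξ`, computed
coefficientwise as a convergent series in `ℂ`. -/
noncomputable def vfExp (l f : PowerSeries ℂ) : PowerSeries ℂ :=
  PowerSeries.mk fun n =>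
    ∑' k : ℕ, (k.factorial : ℂ)⁻¹ * PowerSeries.coeff (R := ℂ) n ((vfAct l)^[k] f)

/-- `d₊⁰`: vector fields `l(ξ) d/dξ` with `l(ξ) = αξ + α₁ξ² + ⋯`, `α ∈ ℝ`. -/
noncomputable def dPlusZero : Set (PowerSeries ℂ) :=
  {l | PowerSeries.coeff (R := ℂ) 0 l = 0 ∧ ∃ α : ℝ, PowerSeries.coeff (R := ℂ) 1 l = (α : ℂ)}

/-- `D₊⁰`: automorphisms of `ℂ((ξ))`, identified with the power series `h(ξ)` which is the
image of `ξ`, with `h(ξ) = aξ + a₁ξ² + ⋯`, `a > 0` real. -/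
noncomputable def DPlusZero : Set (PowerSeries ℂ) :=
  {h | PowerSeries.coeff (R := ℂ) 0 h = 0 ∧
       ∃ a : ℝ, 0 < a ∧ PowerSeries.coeff (R := ℂ) 1 h = (a : ℂ)}

/-!
When `l(0) = 0` the derivation `l · d/dξ` does not lower the `ξ`-adic order, so every coefficient
of `exp(l)(ξ)` is an absolutely convergent series depending only on finitely many coefficients of
`l`. Its linear coefficient is `e^α`, `α = l₁`, and for `n ≥ 2` the `n`-th coefficient equals
`c · lₙ` plus a function of `l₁, …, lₙ₋₁`, where `c = ∑ₖ (1/k!) ∑_{i<k} αⁱ (nα)^{k-1-i}` is the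
divided difference `(e^{nα} - e^α) / ((n - 1)α)` of `exp` (equal to `1` at `α = 0`). For real `α`
it does not vanish, so the coefficients of `l` are determined by, and can be solved for from,
those of `exp(l)(ξ)` degree by degree, while `α ↦ e^α` matches `ℝ` with the positive linear
coefficients.
-/

open Finset

section VectorField

variable {l l' f : PowerSeries ℂ}

lemma coeff_vfAct (l f : PowerSeries ℂ) (p : ℕ) :
    coeff p (vfAct l f) =
      ∑ ij ∈ antidiagonal p, coeff ij.1 l * ((ij.2 + 1) * coeff (ij.2 + 1) f) := by
  simp [vfAct, coeff_mul, psDeriv]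

lemma coeff_zero_vfAct (hl0 : coeff 0 l = 0) (f : PowerSeries ℂ) : coeff 0 (vfAct l f) = 0 := by
  simp [coeff_vfAct, hl0]

lemma coeff_one_vfAct (hl0 : coeff 0 l = 0) (f : PowerSeries ℂ) :
    coeff 1 (vfAct l f) = coeff 1 l * coeff 1 f := by
  simp [coeff_vfAct, Nat.sum_antidiagonal_succ, hl0]

lemma coeff_add_two_vfAct (hl0 : coeff 0 l = 0) (f : PowerSeries ℂ) (m : ℕ) :
    coeff (m + 2) (vfAct l f) =
      (m + 2) * coeff 1 l * coeff (m + 2) f + coeff 1 f * coeff (m + 2) l +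
        ∑ i ∈ range m, coeff (i + 2) l * (((m - i : ℕ) + 1) * coeff (m - i + 1) f) := by
  rw [coeff_vfAct, Nat.sum_antidiagonal_eq_sum_range_succ_mk, sum_range_succ, sum_range_succ',
    sum_range_succ']
  simp only [Nat.reduceSubDiff, zero_add, Nat.add_one_sub_one, Nat.cast_add, Nat.cast_one, hl0,
    tsub_zero, Nat.cast_ofNat, zero_mul, add_zero, tsub_self, CharP.cast_eq_zero, one_mul]
  ring_nf

lemma coeff_vfAct_congr {f' : PowerSeries ℂ} {n : ℕ} (hl0 : coeff 0 l = 0)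
    (hl : ∀ q ≤ n, coeff q l = coeff q l') (hf : ∀ q ≤ n, coeff q f = coeff q f') {p : ℕ}
    (hp : p ≤ n) : coeff p (vfAct l f) = coeff p (vfAct l' f') := by
  rw [coeff_vfAct, coeff_vfAct]
  refine sum_congr rfl fun ij hij => ?_
  rw [HasAntidiagonal.mem_antidiagonal] at hij
  rcases Nat.eq_zero_or_pos ij.1 with h0 | h1
  · rw [h0, ← hl 0 n.zero_le, hl0, zero_mul, zero_mul]
  · rw [hl ij.1 (by omega), hf (ij.2 + 1) (by omega)]

lemma norm_coeff_vfAct_le {n : ℕ} {B C : ℝ} (hl0 : coeff 0 l = 0)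
    (hB : ∀ q ≤ n, ‖coeff q l‖ ≤ B) (hC : ∀ q ≤ n, ‖coeff q f‖ ≤ C) {p : ℕ} (hp : p ≤ n) :
    ‖coeff p (vfAct l f)‖ ≤ (n + 1) ^ 2 * B * C := by
  have hB0 : 0 ≤ B := (norm_nonneg _).trans (hB 0 n.zero_le)
  have hC0 : 0 ≤ C := (norm_nonneg _).trans (hC 0 n.zero_le)
  have hterm : ∀ ij ∈ antidiagonal p,
      ‖coeff ij.1 l * ((ij.2 + 1) * coeff (ij.2 + 1) f)‖ ≤ B * ((n + 1) * C) := by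
    rintro ⟨i, j⟩ hij
    rw [HasAntidiagonal.mem_antidiagonal] at hij
    rcases i.eq_zero_or_pos with rfl | hi
    · simp only [hl0, zero_mul, norm_zero]
      positivity
    · have hj : ‖(j : ℂ) + 1‖ ≤ n + 1 := by
        rw [← Nat.cast_add_one, Complex.norm_natCast]
        exact_mod_cast (by omega : j + 1 ≤ n + 1)
      rw [norm_mul, norm_mul]
      gcongr
      exacts [hB i (by omega), hC (j + 1) (by omega)]
  calc ‖coeff p (vfAct l f)‖
      ≤ ∑ ij ∈ antidiagonal p, ‖coeff ij.1 l * ((ij.2 + 1) * coeff (ij.2 + 1) f)‖ := by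
        rw [coeff_vfAct]
        exact norm_sum_le _ _
    _ ≤ (p + 1) * (B * ((n + 1) * C)) := by
        simpa using sum_le_card_nsmul _ _ _ hterm
    _ ≤ (n + 1) * (B * ((n + 1) * C)) := by
        gcongr
    _ = (n + 1) ^ 2 * B * C := by ring

end VectorField

section Iterate

variable {l l' : PowerSeries ℂ}

open Function

lemma coeff_zero_iterate_vfAct {f : PowerSeries ℂ} (hl0 : coeff 0 l = 0) (hf0 : coeff 0 f = 0)
    (k : ℕ) : coeff 0 ((vfAct l)^[k] f) = 0 := by
  cases k with
  | zero => exact hf0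
  | succ k => rw [iterate_succ_apply', coeff_zero_vfAct hl0]

lemma coeff_one_iterate_vfAct_X (hl0 : coeff 0 l = 0) (k : ℕ) :
    coeff 1 ((vfAct l)^[k] X) = coeff 1 l ^ k := by
  induction k with
  | zero => simp
  | succ k ih => rw [iterate_succ_apply', coeff_one_vfAct hl0, ih, pow_succ']

lemma coeff_iterate_vfAct_congr {f : PowerSeries ℂ} {n : ℕ} (hl0 : coeff 0 l = 0)
    (hl : ∀ q ≤ n, coeff q l = coeff q l') (k : ℕ) {p : ℕ} (hp : p ≤ n) :
    coeff p ((vfAct l)^[k] f) = coeff p ((vfAct l')^[k] f) := by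
  induction k generalizing p with
  | zero => rfl
  | succ k ih =>
    simp only [iterate_succ_apply']
    exact coeff_vfAct_congr hl0 hl (fun q hq => ih hq) hp

lemma coeff_add_two_iterate_vfAct_X_sub (hl0 : coeff 0 l = 0) (hl0' : coeff 0 l' = 0) (m : ℕ)
    (hl : ∀ q ≤ m + 1, coeff q l = coeff q l') (k : ℕ) :
    coeff (m + 2) ((vfAct l)^[k] X) - coeff (m + 2) ((vfAct l')^[k] X) =
      (∑ i ∈ range k, coeff 1 l ^ i * ((m + 2) * coeff 1 l) ^ (k - 1 - i)) *
        (coeff (m + 2) l - coeff (m + 2) l') := by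
  induction k with
  | zero => simp [coeff_X]
  | succ k ih =>
    have hl1 : coeff 1 l' = coeff 1 l := (hl 1 (by omega)).symm
    have hmid : ∀ i ∈ range m, coeff (i + 2) l * (((m - i : ℕ) + 1) *
        coeff (m - i + 1) ((vfAct l)^[k] X)) = coeff (i + 2) l' * (((m - i : ℕ) + 1) *
        coeff (m - i + 1) ((vfAct l')^[k] X)) := fun i hi => by
      rw [mem_range] at hi
      rw [hl (i + 2) (by omega), coeff_iterate_vfAct_congr hl0 hl k (by omega)]
    rw [iterate_succ_apply', iterate_succ_apply', coeff_add_two_vfAct hl0,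
      coeff_add_two_vfAct hl0', sum_congr rfl hmid, coeff_one_iterate_vfAct_X hl0,
      coeff_one_iterate_vfAct_X hl0', hl1, Nat.add_sub_cancel, geom_sum₂_succ_eq]
    linear_combination ((m + 2) * coeff 1 l) * ih

lemma norm_coeff_iterate_vfAct_le {f : PowerSeries ℂ} {n : ℕ} {B C : ℝ} (hl0 : coeff 0 l = 0)
    (hB : ∀ q ≤ n, ‖coeff q l‖ ≤ B) (hC : ∀ q ≤ n, ‖coeff q f‖ ≤ C) (k : ℕ) {p : ℕ}
    (hp : p ≤ n) : ‖coeff p ((vfAct l)^[k] f)‖ ≤ ((n + 1) ^ 2 * B) ^ k * C := by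
  induction k generalizing p with
  | zero => simpa using hC p hp
  | succ k ih =>
    rw [iterate_succ_apply', pow_succ', mul_assoc]
    exact norm_coeff_vfAct_le hl0 hB (fun q hq => ih hq) hp

lemma summable_coeff_iterate_vfAct (hl0 : coeff 0 l = 0) (f : PowerSeries ℂ) (n : ℕ) :
    Summable fun k => (k.factorial : ℂ)⁻¹ * coeff n ((vfAct l)^[k] f) := by
  have le_sum (g : PowerSeries ℂ) {q : ℕ} (hq : q ≤ n) :
      ‖coeff q g‖ ≤ ∑ r ∈ range (n + 1), ‖coeff r g‖ :=
    single_le_sum (f := fun r => ‖coeff r g‖) (fun _ _ => norm_nonneg _)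
      (mem_range.2 (Nat.lt_succ_of_le hq))
  set K := (n + 1) ^ 2 * ∑ r ∈ range (n + 1), ‖coeff r l‖
  refine ((Real.summable_pow_div_factorial K).mul_right (∑ r ∈ range (n + 1), ‖coeff r f‖))
    |>.of_norm_bounded fun k => ?_
  rw [norm_mul, norm_inv, Complex.norm_natCast, div_mul_eq_mul_div, div_eq_inv_mul]
  gcongr
  exact norm_coeff_iterate_vfAct_le hl0 (fun _ => le_sum l) (fun _ => le_sum f) k le_rfl

end Iterate

section DividedDifference

open Complex

lemma hasSum_inv_factorial_mul_pow (x : ℂ) :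
    HasSum (fun k => (k.factorial : ℂ)⁻¹ * x ^ k) (exp x) := by
  rw [exp_eq_exp_ℂ]
  simpa only [div_eq_inv_mul] using NormedSpace.expSeries_div_hasSum_exp x

lemma tsum_inv_factorial_mul_geom_sum₂ (x y : ℂ) :
    ∑' k, (k.factorial : ℂ)⁻¹ * ∑ i ∈ range k, x ^ i * y ^ (k - 1 - i) = dslope exp x y := by
  rcases eq_or_ne y x with rfl | hyx
  · rw [dslope_same, Complex.deriv_exp]
    simp_rw [geom_sum₂_self]
    have hshift : HasSum (fun k => ((k + 1).factorial : ℂ)⁻¹ *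
        (((k + 1 : ℕ) : ℂ) * y ^ (k + 1 - 1))) (exp y) := by
      refine (hasSum_inv_factorial_mul_pow y).congr_fun fun k => ?_
      rw [Nat.factorial_succ, Nat.add_sub_cancel]
      push_cast
      field_simp
    have := ((hasSum_nat_add_iff
      (f := fun k => (k.factorial : ℂ)⁻¹ * ((k : ℂ) * y ^ (k - 1))) 1).1 hshift).tsum_eq
    rwa [sum_range_one, Nat.cast_zero, zero_mul, mul_zero, add_zero] at this
  · rw [dslope_of_ne _ hyx, slope_def_field, eq_div_iff (sub_ne_zero.2 hyx), ← tsum_mul_right]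
    have hterm (k : ℕ) : (k.factorial : ℂ)⁻¹ * (∑ i ∈ range k, x ^ i * y ^ (k - 1 - i)) * (y - x) =
        (k.factorial : ℂ)⁻¹ * y ^ k - (k.factorial : ℂ)⁻¹ * x ^ k := by
      linear_combination (-(k.factorial : ℂ)⁻¹) * geom_sum₂_mul x y k
    simp_rw [hterm]
    exact ((hasSum_inv_factorial_mul_pow y).sub (hasSum_inv_factorial_mul_pow x)).tsum_eq

lemma dslope_exp_ofReal_ne_zero (x y : ℝ) : dslope exp (x : ℂ) y ≠ 0 := by
  rcases eq_or_ne y x with rfl | hyx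
  · rw [dslope_same, Complex.deriv_exp]
    exact exp_ne_zero _
  · have hyx' : (y : ℂ) ≠ x := by exact_mod_cast hyx
    rw [dslope_of_ne _ hyx', slope_def_field]
    refine div_ne_zero ?_ (sub_ne_zero.2 hyx')
    rw [sub_ne_zero, ← ofReal_exp, ← ofReal_exp, Ne, ofReal_inj]
    exact Real.exp_injective.ne hyx

lemma dslope_exp_ofReal_natCast_add_two_mul_ne_zero (α : ℝ) (m : ℕ) :
    dslope exp (α : ℂ) ((m + 2) * α) ≠ 0 := by
  have := dslope_exp_ofReal_ne_zero α ((m + 2) * α)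
  push_cast at this
  exact this

end DividedDifference

section Exponential

open Complex

variable {l l' : PowerSeries ℂ}

lemma coeff_vfExp (l f : PowerSeries ℂ) (n : ℕ) :
    coeff n (vfExp l f) = ∑' k, (k.factorial : ℂ)⁻¹ * coeff n ((vfAct l)^[k] f) :=
  coeff_mk _ _

lemma coeff_zero_vfExp_X (hl0 : coeff 0 l = 0) : coeff 0 (vfExp l X) = 0 := by
  simp [coeff_vfExp, coeff_zero_iterate_vfAct hl0 (coeff_zero_X (R := ℂ))]

lemma coeff_one_vfExp_X (hl0 : coeff 0 l = 0) : coeff 1 (vfExp l X) = exp (coeff 1 l) := by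
  simp_rw [coeff_vfExp, coeff_one_iterate_vfAct_X hl0]
  exact (hasSum_inv_factorial_mul_pow _).tsum_eq

lemma coeff_add_two_vfExp_X_sub (hl0 : coeff 0 l = 0) (hl0' : coeff 0 l' = 0) (m : ℕ)
    (hl : ∀ q ≤ m + 1, coeff q l = coeff q l') :
    coeff (m + 2) (vfExp l X) - coeff (m + 2) (vfExp l' X) =
      dslope exp (coeff 1 l) ((m + 2) * coeff 1 l) * (coeff (m + 2) l - coeff (m + 2) l') := by
  rw [coeff_vfExp, coeff_vfExp, ← (summable_coeff_iterate_vfAct hl0 X _).tsum_sub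
    (summable_coeff_iterate_vfAct hl0' X _), ← tsum_inv_factorial_mul_geom_sum₂, ← tsum_mul_right]
  refine tsum_congr fun k => ?_
  rw [← mul_sub, coeff_add_two_iterate_vfAct_X_sub hl0 hl0' m hl k, mul_assoc]

end Exponential

lemma mapsTo_vfExp_X : Set.MapsTo (fun l => vfExp l X) dPlusZero DPlusZero := by
  rintro l ⟨hl0, α, hα⟩
  exact ⟨coeff_zero_vfExp_X hl0, Real.exp α, Real.exp_pos α, by
    rw [coeff_one_vfExp_X hl0, hα, Complex.ofReal_exp]⟩

lemma injOn_vfExp_X : Set.InjOn (fun l => vfExp l X) dPlusZero := by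
  rintro l ⟨hl0, α, hα⟩ l' ⟨hl0', α', hα'⟩ (heq : vfExp l X = vfExp l' X)
  have h1 : coeff 1 l = coeff 1 l' := by
    have := congrArg (coeff 1) heq
    rw [coeff_one_vfExp_X hl0, coeff_one_vfExp_X hl0', hα, hα', ← Complex.ofReal_exp,
      ← Complex.ofReal_exp, Complex.ofReal_inj] at this
    rw [hα, hα', Real.exp_injective this]
  ext n
  induction n using Nat.strong_induction_on with
  | _ n ih =>
    match n, ih with
    | 0, _ => rw [hl0, hl0']
    | 1, _ => exact h1
    | m + 2, ih =>
      have key := coeff_add_two_vfExp_X_sub hl0 hl0' m fun q hq => ih q (by omega)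
      rw [heq, sub_self, eq_comm, mul_eq_zero, sub_eq_zero, hα] at key
      exact key.resolve_left (dslope_exp_ofReal_natCast_add_two_mul_ne_zero α m)

/-- `l_{m+2}` is chosen so that `coeff_add_two_vfExp_X_sub`, applied to `l` and to its truncation
below degree `m + 2`, gives `exp(l)(ξ)_{m+2} = h_{m+2}`. -/
noncomputable def vfLogCoeff (h : PowerSeries ℂ) : ℕ → ℂ
  | 0 => 0
  | 1 => Real.log (coeff 1 h).re
  | m + 2 =>
    (coeff (m + 2) h -
        coeff (m + 2) (vfExp (mk fun q => if q < m + 2 then vfLogCoeff h q else 0) X)) /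
      dslope Complex.exp (Real.log (coeff 1 h).re : ℂ) ((m + 2) * Real.log (coeff 1 h).re)

lemma surjOn_vfExp_X : Set.SurjOn (fun l => vfExp l X) dPlusZero DPlusZero := by
  rintro h ⟨hh0, a, ha, hh1⟩
  set l := mk (vfLogCoeff h)
  have hl0 : coeff 0 l = 0 := by simp [l, vfLogCoeff]
  have hl1 : coeff 1 l = Real.log a := by simp [l, vfLogCoeff, hh1]
  refine ⟨l, ⟨hl0, _, hl1⟩, ?_⟩
  show vfExp l X = h
  ext n
  match n with
  | 0 => rw [coeff_zero_vfExp_X hl0, hh0]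
  | 1 => rw [coeff_one_vfExp_X hl0, hl1, ← Complex.ofReal_exp, Real.exp_log ha, hh1]
  | m + 2 =>
    set T := mk fun q => if q < m + 2 then vfLogCoeff h q else 0
    have hT0 : coeff 0 T = 0 := by simp [T, vfLogCoeff]
    have hlT : ∀ q ≤ m + 1, coeff q l = coeff q T := fun q hq => by
      simp [l, T, show q < m + 2 by omega]
    have key := coeff_add_two_vfExp_X_sub hl0 hT0 m hlT
    have hs := dslope_exp_ofReal_natCast_add_two_mul_ne_zero (Real.log a) m
    rw [hl1] at key
    simp only [l, T, coeff_mk, lt_irrefl, if_false, sub_zero] at key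
    rw [vfLogCoeff, hh1, Complex.ofReal_re, mul_div_cancel₀ _ hs] at key
    linear_combination key

/-- The exponential map `exp : d → D`, `l ↦ exp(l)`, defined by
`exp(l)(f) = ∑_{k≥0} (1/k!) lᵏf` and recorded via the image `exp(l)(ξ)` of `ξ`, restricts
to a bijection from `d₊⁰ = {(αξ + α₁ξ² + ⋯) d/dξ : α ∈ ℝ}` onto
`D₊⁰ = {h : h(ξ) = aξ + a₁ξ² + ⋯, a > 0}`. -/
theorem exp_bijOn_dPlusZero :
    Set.BijOn (fun l : PowerSeries ℂ => vfExp l PowerSeries.X) dPlusZero DPlusZero :=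
  ⟨mapsTo_vfExp_X, injOn_vfExp_X, surjOn_vfExp_X⟩
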